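/- Fix integers n ≥ 2 and l, m ≥ 0. For all α, γ ∈ B^{(n)}_l and β, δ ∈ B^{(n)}_m with γ − δ = α − β, the rational function z ↦ A^{(m,l)}(z)^{ρ(δ),ρ(α)}_{ρ(β),ρ(γ)} ∈ ℚ(q)(z) is regular at z = q^{−m−l}, and its value there equals q^{⟨δ,α⟩ + ⟨γ,β⟩} · binom(l+m, m)_{q²}^{−1} · ∏_{i=1}^{n} binom(α_i + δ_i, α_i)_{q²}, where ρ(α) = (α_n, …, α₂, α₁) denotes the reversal. (Equivalently, the R matrix with elements R*(z)^{γ,δ}_{α,β} = θ(γ−δ = α−β) A^{(m,l)}(z^{−1})^{ρ(δ),ρ(α)}_{ρ(β),ρ(γ)} factorizes at the special point z = q^{m+l}.) -/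

import Mathlib

open scoped Classical

noncomputable section

namespace KOY

/-- `F = ℚ(q)`, the field of rational functions in an indeterminate `q` over `ℚ`. -/
abbrev Fq : Type := RatFunc ℚ

/-- The indeterminate `q`. -/
def q : Fq := RatFunc.X

/-- `[u] = (q^u - q^{-u})/(q - q⁻¹)`. -/
def qint (u : ℤ) : Fq := (q ^ u - q ^ (-u)) / (q - q⁻¹)

/-- `(z; a)_m = ∏_{k=0}^{m-1} (1 - z a^k)`. -/
def poch {R : Type*} [CommRing R] (z a : R) (m : ℕ) : R :=
  ∏ k ∈ Finset.range m, (1 - z * a ^ k)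

/-- The `q`-boson Fock space `⊕_{m ≥ 0} F·|m⟩`. -/
abbrev Fock : Type := ℕ →₀ Fq

/-- creation operator `a⁺ |m⟩ = |m+1⟩`. -/
def aP : Module.End Fq Fock := Finsupp.lift Fock Fq ℕ fun m => Finsupp.single (m + 1) 1

/-- annihilation operator `a⁻ |m⟩ = (1-q^m)|m-1⟩`. -/
def aM : Module.End Fq Fock :=
  Finsupp.lift Fock Fq ℕ fun m => (1 - q ^ m) • Finsupp.single (m - 1) 1

/-- `k |m⟩ = q^m |m⟩`. -/
def kO : Module.End Fq Fock := Finsupp.lift Fock Fq ℕ fun m => q ^ m • Finsupp.single m 1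

/-- The operator `G^j_i` for `i, j ≥ 0` (`i` = lower index, `j` = upper index):
`G^j_i = (-q;q)_{i+j} Σ_{m=0}^{t} ((q^{-t};q)_m (-q^{-t};q)_m / ((q;q)_m (-q^{-s};q)_m))
  (a⁺)^{(j-i)_+} (q^m k^m) (a⁻)^{(i-j)_+}` with `s = i+j`, `t = min i j`. -/
def GopN (i j : ℕ) : Module.End Fq Fock :=
  poch (-q) q (i + j) •
    ∑ m ∈ Finset.range (min i j + 1),
      (poch (q ^ (-(min i j : ℤ))) q m * poch (-q ^ (-(min i j : ℤ))) q m /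
          (poch q q m * poch (-q ^ (-((i : ℤ) + j))) q m)) •
        (aP ^ (j - i) * (q ^ m • kO ^ m) * aM ^ (i - j))

/-- `G^j_i` with the convention that it vanishes for negative indices. -/
def Gop (i j : ℤ) : Module.End Fq Fock :=
  if 0 ≤ i ∧ 0 ≤ j then GopN i.toNat j.toNat else 0

/-- `X_{mm}`: the coefficient of `|m⟩` in `X |m⟩`. -/
def elem (X : Module.End Fq Fock) (m : ℕ) : Fq := X (Finsupp.single m 1) m

/-- `⟨a, b⟩ = ∑_{i<j} a_i b_j` (natural numbers). -/
def innN {n : ℕ} (a b : Fin n → ℕ) : ℕ := ∑ i, ∑ j, if i < j then a i * b j else 0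

/-- `⟨a, b⟩ = ∑_{i<j} a_i b_j` (integers). -/
def innZ {n : ℕ} (a b : Fin n → ℤ) : ℤ := ∑ i, ∑ j, if i < j then a i * b j else 0

/-- `|a| = ∑ a_i`. -/
def asum {k : ℕ} (a : Fin k → ℤ) : ℤ := ∑ i, a i

/-- coercion of arrays to integer arrays. -/
def castZ {n : ℕ} (a : Fin n → ℕ) : Fin n → ℤ := fun i => (a i : ℤ)

/-- The matrix product formula for `K^{(n,l)}(z)^γ_α` as a power series in `t = z⁻¹`:
`q^{⟨γ,α⟩} (q^{-l}t;q)_{l+1} ((q²;q²)_l (-qt;q)_l)⁻¹ Σ_{m≥0} q^{-lm} t^m (G^{γ₁}_{α₁}⋯G^{γₙ}_{αₙ})_{mm}`,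
with coefficients transported along a ring hom `f` from `ℚ(q)`. -/
def KmatPS {K : Type*} [Field K] (f : Fq →+* K) (n l : ℕ) (α γ : Fin n → ℕ) :
    PowerSeries K :=
  PowerSeries.C (R := K) (f (q ^ innN γ α)) *
    poch (PowerSeries.C (R := K) (f (q ^ (-(l : ℤ)))) * PowerSeries.X) (PowerSeries.C (R := K) (f q)) (l + 1) *
    (PowerSeries.C (R := K) (f (poch (q ^ 2) (q ^ 2) l)) *
        poch (PowerSeries.C (R := K) (f (-q)) * PowerSeries.X) (PowerSeries.C (R := K) (f q)) l)⁻¹ *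
    PowerSeries.mk fun m =>
      f (q ^ (-(l * m : ℤ)) * elem (List.ofFn fun i => Gop (α i) (γ i)).prod m)

/-- `F((t))`, the field of formal Laurent series in `t`. -/
abbrev LS : Type := LaurentSeries Fq

/-- `K^{(n,l)}(z)^γ_α ∈ F((t))` (first array = lower index `α`, second = upper index `γ`). -/
def Kmat (n l : ℕ) (α γ : Fin n → ℕ) : LS :=
  HahnSeries.ofPowerSeries ℤ Fq (KmatPS (RingHom.id Fq) n l α γ)

/-- Extension of `Kmat` to integer arrays, vanishing if some entry is negative. -/
def KmatZ (n l : ℕ) (α γ : Fin n → ℤ) : LS :=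
  if (∀ i, 0 ≤ α i) ∧ ∀ i, 0 ≤ γ i then
    Kmat n l (fun i => (α i).toNat) fun i => (γ i).toNat
  else 0

/-- `t ∈ F((t))`. -/
def T : LS := HahnSeries.single (1 : ℤ) (1 : Fq)

/-- the constant embedding `F → F((t))`. -/
def CL : Fq →+* LS := HahnSeries.C

/-- `Φ̄_q(γ|β; λ, μ)` for integer arrays, vanishing unless `0 ≤ γ ≤ β`. -/
def phiBarP {K : Type*} [Field K] (qv lam mu : K) {k : ℕ} (γ β : Fin k → ℤ) : K :=
  if ∀ i, 0 ≤ γ i ∧ γ i ≤ β i then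
    poch lam qv (asum γ).toNat * poch (mu / lam) qv (asum β - asum γ).toNat /
        poch mu qv (asum β).toNat *
      ∏ i, poch qv qv (β i).toNat / (poch qv qv (β i - γ i).toNat * poch qv qv (γ i).toNat)
  else 0

/-- `Φ_q(γ|β; λ, μ) = q^{⟨β-γ,γ⟩} (μ/λ)^{|γ|} Φ̄_q(γ|β; λ, μ)`. -/
def phiP {K : Type*} [Field K] (qv lam mu : K) {k : ℕ} (γ β : Fin k → ℤ) : K :=
  qv ^ innZ (β - γ) γ * (mu / lam) ^ asum γ * phiBarP qv lam mu γ β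

/-- truncation `ᾱ = (α₁, …, α_{n-1})` (as an integer array). -/
def bar {n : ℕ} (a : Fin n → ℕ) : Fin (n - 1) → ℤ :=
  fun i => (a ⟨i.val, by have := i.isLt; omega⟩ : ℤ)

/-- `A^{(l,m)}(z)^{γ,δ}_{α,β}
  = q^{⟨α,β⟩-⟨δ,γ⟩} Σ_{ξ̄+η̄=γ̄+δ̄} Φ_{q²}(ξ̄-δ̄|ξ̄; q^{m-l}z, q^{-l-m}z) Φ_{q²}(η̄|β̄; q^{-l-m}z⁻¹, q^{-2m})`
in any field, for chosen values of `q` and `z`. -/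
def Amat {K : Type*} [Field K] (qv zv : K) {n : ℕ} (l m : ℕ) (γ δ α β : Fin n → ℕ) : K :=
  qv ^ ((innN α β : ℤ) - (innN δ γ : ℤ)) *
    ∑ ξ ∈ Finset.Icc (0 : Fin (n - 1) → ℤ) (bar γ + bar δ),
      phiP (qv ^ 2) (qv ^ ((m : ℤ) - l) * zv) (qv ^ (-(l : ℤ) - m) * zv) (ξ - bar δ) ξ *
        phiP (qv ^ 2) (qv ^ (-(l : ℤ) - m) * zv⁻¹) (qv ^ (-(2 * m : ℤ))) (bar γ + bar δ - ξ)
          (bar β)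

/-- `𝒮(λ,μ)^{γ,δ}_{α,β} = θ(γ+δ=α+β) q^{⟨β-γ,γ⟩+⟨α,β-γ⟩+|α||β|-|γ||δ|} λ^{2(|δ|-|α|)}
  Φ̄_{q²}(α|δ; λ², μ²)`, the parametric `R` matrix element. -/
def Smat {K : Type*} [Field K] (qv lam mu : K) {k : ℕ} (γ δ α β : Fin k → ℕ) : K :=
  if γ + δ = α + β then
    qv ^ (innZ (castZ β - castZ γ) (castZ γ) + innZ (castZ α) (castZ β - castZ γ) +
          (asum (castZ α) * asum (castZ β) - asum (castZ γ) * asum (castZ δ))) *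
      lam ^ (2 * (asum (castZ δ) - asum (castZ α))) *
      phiBarP (qv ^ 2) (lam ^ 2) (mu ^ 2) (castZ α) (castZ δ)
  else 0

/-- reversal `ρ(a) = (a_n, …, a_1)`. -/
def rev {n : ℕ} {M : Type*} (a : Fin n → M) : Fin n → M := fun i => a i.rev

/-- cyclic shift `σ(a) = (a_2, …, a_n, a_1)`. -/
def cyc {n : ℕ} {M : Type*} (a : Fin n → M) : Fin n → M :=
  fun i => a ⟨(i.val + 1) % n, Nat.mod_lt _ (by have := i.isLt; omega)⟩

/-- the cyclic successor on `Fin n`. -/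
def nxt {n : ℕ} (i : Fin n) : Fin n :=
  ⟨(i.val + 1) % n, Nat.mod_lt _ (by have := i.isLt; omega)⟩

/-- deletion of the `i`-th entry of an array. -/
def del {n : ℕ} (i : Fin n) (a : Fin n → ℕ) : Fin (n - 1) → ℕ :=
  fun j =>
    if (j : ℕ) < (i : ℕ) then a ⟨j, by have := j.isLt; omega⟩
    else a ⟨(j : ℕ) + 1, by have := j.isLt; omega⟩

/-- the `q²`-binomial coefficient `binom(b, c)_{q²}` as an element of `ℚ(q)`. -/
def qbinom2 (b c : ℕ) : Fq :=
  poch (q ^ 2) (q ^ 2) b / (poch (q ^ 2) (q ^ 2) (b - c) * poch (q ^ 2) (q ^ 2) c)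

/-- `ℚ(q)(z) = ℚ(q, z)`. -/
abbrev Fqz : Type := RatFunc Fq

/-- the image of `q` in `ℚ(q, z)`. -/
def qz : Fqz := RatFunc.C q

/-- the indeterminate `z` in `ℚ(q, z)`. -/
def zz : Fqz := RatFunc.X

/-!
At `z = q^{-m-l}` the parameter `q^{-l-m} z⁻¹` of the second `Φ`-factor of `A^{(m,l)}` equals `1`,
and `(1; q²)_{|η̄|}` vanishes unless `η̄ = 0`, so the sum over `ξ̄ + η̄` collapses to the single
term `Φ_{q²}(δ̄ | δ̄ + ᾱ; q^{-2m}, q^{-2(m+l)})` (for the reversed arrays). No denominator vanishes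
there: they are all of the form `(q^{-2N}; q²)_k` with `k ≤ N`. The identity
`(q^{-2N}; q²)_k (q²; q²)_{N-k} = (-1)^k q^{k(k-1)-2Nk} (q²; q²)_N` turns the three Pochhammer
symbols of that term into `binom(l+m, m)_{q²}⁻¹ binom(α₁+δ₁, α₁)_{q²}`, and the powers of `q`
reassemble `⟨δ, α⟩` once the first index is split off.
-/

lemma intDegree_X_zpow {K : Type*} [Field K] (k : ℤ) :
    RatFunc.intDegree (RatFunc.X ^ k : RatFunc K) = k := by
  have hX : (RatFunc.X : RatFunc K) ≠ 0 := RatFunc.X_ne_zero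
  induction k using Int.induction_on with
  | zero => simp [RatFunc.intDegree_one]
  | succ k ih =>
    rw [zpow_add_one₀ hX, RatFunc.intDegree_mul (zpow_ne_zero _ hX) hX, ih, RatFunc.intDegree_X]
  | pred k ih =>
    rw [zpow_sub_one₀ hX, RatFunc.intDegree_mul (zpow_ne_zero _ hX) (inv_ne_zero hX),
      RatFunc.intDegree_inv, RatFunc.intDegree_X, ih, sub_eq_add_neg]

lemma q_ne_zero : q ≠ 0 := RatFunc.X_ne_zero

lemma q_zpow_ne_one {k : ℤ} (hk : k ≠ 0) : q ^ k ≠ 1 := fun h => by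
  have hdeg := intDegree_X_zpow (K := ℚ) k
  rw [← q, h, RatFunc.intDegree_one] at hdeg
  exact hk hdeg.symm

lemma poch_q_zpow_ne_zero {a : ℤ} {k : ℕ} (h : ∀ j < k, a + 2 * j ≠ 0) :
    poch (q ^ a) (q ^ 2) k ≠ 0 := by
  refine Finset.prod_ne_zero_iff.mpr fun j hj => sub_ne_zero.mpr (Ne.symm ?_)
  rw [← pow_mul, ← zpow_natCast, ← zpow_add₀ q_ne_zero]
  exact q_zpow_ne_one (by push_cast; exact h j (Finset.mem_range.mp hj))

lemma poch_qsq_ne_zero (N : ℕ) : poch (q ^ 2) (q ^ 2) N ≠ 0 := by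
  simpa using poch_q_zpow_ne_zero (a := 2) (k := N) fun j _ => by omega

lemma poch_q_neg_ne_zero {N k : ℕ} (h : k ≤ N) : poch (q ^ (-(2 * N : ℤ))) (q ^ 2) k ≠ 0 :=
  poch_q_zpow_ne_zero fun j hj => by omega

section HasValueAt

variable {K : Type*} [Field K] {z₀ : K}

def HasValueAt (x : RatFunc K) (z₀ v : K) : Prop :=
  x.denom.eval z₀ ≠ 0 ∧ x.eval (RingHom.id K) z₀ = v

lemma hasValueAt_C (c : K) : HasValueAt (RatFunc.C c) z₀ c := by
  simp [HasValueAt]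

lemma hasValueAt_X : HasValueAt RatFunc.X z₀ z₀ := by
  simp [HasValueAt]

lemma hasValueAt_zero : HasValueAt 0 z₀ 0 := by
  simpa using hasValueAt_C (z₀ := z₀) 0

lemma hasValueAt_one : HasValueAt 1 z₀ 1 := by
  simpa using hasValueAt_C (z₀ := z₀) 1

lemma eval_ne_zero_of_dvd {p r : Polynomial K} (h : p ∣ r) (hr : r.eval z₀ ≠ 0) :
    p.eval z₀ ≠ 0 := by
  obtain ⟨c, rfl⟩ := h
  exact left_ne_zero_of_mul (by rwa [Polynomial.eval_mul] at hr)

namespace HasValueAt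

variable {x y : RatFunc K} {u v : K}

lemma add (hx : HasValueAt x z₀ u) (hy : HasValueAt y z₀ v) :
    HasValueAt (x + y) z₀ (u + v) := by
  refine ⟨eval_ne_zero_of_dvd (RatFunc.denom_add_dvd x y) ?_, ?_⟩
  · rw [Polynomial.eval_mul]; exact mul_ne_zero hx.1 hy.1
  · rw [RatFunc.eval_add _ _ hx.1 hy.1, hx.2, hy.2]

lemma mul (hx : HasValueAt x z₀ u) (hy : HasValueAt y z₀ v) :
    HasValueAt (x * y) z₀ (u * v) := by
  refine ⟨eval_ne_zero_of_dvd (RatFunc.denom_mul_dvd x y) ?_, ?_⟩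
  · rw [Polynomial.eval_mul]; exact mul_ne_zero hx.1 hy.1
  · rw [RatFunc.eval_mul _ _ hx.1 hy.1, hx.2, hy.2]

lemma sub (hx : HasValueAt x z₀ u) (hy : HasValueAt y z₀ v) :
    HasValueAt (x - y) z₀ (u - v) := by
  simpa [sub_eq_add_neg] using hx.add ((hasValueAt_C (-1)).mul hy)

lemma pow (hx : HasValueAt x z₀ u) (k : ℕ) : HasValueAt (x ^ k) z₀ (u ^ k) := by
  induction k with
  | zero => simpa using hasValueAt_one
  | succ k ih => simpa [pow_succ] using ih.mul hx

lemma inv (hx : HasValueAt x z₀ u) (hu : u ≠ 0) : HasValueAt x⁻¹ z₀ u⁻¹ := by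
  have hx0 : x ≠ 0 := by rintro rfl; exact hu (by simpa using hx.2.symm)
  have hnum : x.num.eval z₀ ≠ 0 := fun h0 => hu <| by
    rw [← hx.2, RatFunc.eval, Polynomial.eval₂_id, h0, zero_div]
  have hreg : x⁻¹.denom.eval z₀ ≠ 0 := by
    rw [← RatFunc.num_div_denom x, inv_div]
    exact eval_ne_zero_of_dvd (RatFunc.denom_div_dvd _ _) hnum
  refine ⟨hreg, eq_inv_of_mul_eq_one_right ?_⟩
  rw [← hx.2, ← RatFunc.eval_mul _ _ hx.1 hreg, mul_inv_cancel₀ hx0]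
  simp

lemma div (hx : HasValueAt x z₀ u) (hy : HasValueAt y z₀ v) (hv : v ≠ 0) :
    HasValueAt (x / y) z₀ (u / v) := by
  simpa [div_eq_mul_inv] using hx.mul (hy.inv hv)

lemma zpow (hx : HasValueAt x z₀ u) (hu : u ≠ 0) (k : ℤ) : HasValueAt (x ^ k) z₀ (u ^ k) := by
  cases k with
  | ofNat k => simpa using hx.pow k
  | negSucc k => simpa [zpow_negSucc] using (hx.pow (k + 1)).inv (pow_ne_zero _ hu)

end HasValueAt

lemma hasValueAt_sum {ι : Type*} (s : Finset ι) {f : ι → RatFunc K} {g : ι → K}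
    (h : ∀ i ∈ s, HasValueAt (f i) z₀ (g i)) : HasValueAt (∑ i ∈ s, f i) z₀ (∑ i ∈ s, g i) := by
  have := Finset.sum_induction (fun i => (f i, g i)) (fun p => HasValueAt p.1 z₀ p.2)
    (fun _ _ => HasValueAt.add) hasValueAt_zero h
  rwa [Prod.fst_sum, Prod.snd_sum] at this

lemma hasValueAt_prod {ι : Type*} (s : Finset ι) {f : ι → RatFunc K} {g : ι → K}
    (h : ∀ i ∈ s, HasValueAt (f i) z₀ (g i)) : HasValueAt (∏ i ∈ s, f i) z₀ (∏ i ∈ s, g i) := by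
  have := Finset.prod_induction (fun i => (f i, g i)) (fun p => HasValueAt p.1 z₀ p.2)
    (fun _ _ => HasValueAt.mul) hasValueAt_one h
  rwa [Prod.fst_prod, Prod.snd_prod] at this

lemma HasValueAt.poch {x a : RatFunc K} {u v : K} (hx : HasValueAt x z₀ u)
    (ha : HasValueAt a z₀ v) (k : ℕ) : HasValueAt (poch x a k) z₀ (poch u v k) :=
  hasValueAt_prod _ fun j _ => hasValueAt_one.sub (hx.mul (ha.pow j))

end HasValueAt

section Arrays

def revInit (n : ℕ) (p : Fin (n - 1)) : Fin n := (Fin.castLE (n.sub_le 1) p).rev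

lemma bar_rev {n : ℕ} (x : Fin n → ℕ) : bar (rev x) = castZ (x ∘ revInit n) := rfl

@[to_additive]
lemma prod_univ_eq_mul_prod_revInit {M : Type*} [CommMonoid M] {n : ℕ} (hn : 0 < n)
    (f : Fin n → M) : ∏ i, f i = f ⟨0, hn⟩ * ∏ p, f (revInit n p) := by
  obtain ⟨k, rfl⟩ : ∃ k, n = k + 1 := ⟨n - 1, by omega⟩
  rw [← Equiv.prod_comp Fin.revPerm, Fin.prod_univ_castSucc, mul_comm]
  congr 1
  exact congrArg f (Fin.ext (by simp))

lemma castZ_rev {n : ℕ} (x : Fin n → ℕ) : castZ (rev x) = rev (castZ x) := rfl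

lemma innZ_rev {n : ℕ} (x y : Fin n → ℤ) : innZ (rev x) (rev y) = innZ y x := by
  unfold innZ rev
  rw [← Equiv.sum_comp Fin.revPerm, Finset.sum_comm, ← Equiv.sum_comp Fin.revPerm]
  refine Fintype.sum_congr _ _ fun j => Fintype.sum_congr _ _ fun i => ?_
  simp only [Fin.revPerm_apply, Fin.rev_rev, Fin.rev_lt_rev]
  split_ifs <;> ring

lemma innZ_castSucc {k : ℕ} (x y : Fin (k + 1) → ℤ) :
    innZ x y = innZ (x ∘ Fin.castSucc) (y ∘ Fin.castSucc) +
      (∑ p : Fin k, x p.castSucc) * y (Fin.last k) := by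
  simp only [innZ, Fin.sum_univ_castSucc, Fin.castSucc_lt_castSucc_iff, Fin.castSucc_lt_last,
    if_true, lt_irrefl, if_false, Function.comp_apply, Finset.sum_add_distrib, Finset.sum_mul,
    not_lt.mpr (Fin.le_last _), Finset.sum_const_zero, add_zero]

lemma innZ_castZ_eq_revInit {n : ℕ} (hn : 0 < n) (x y : Fin n → ℕ) :
    innZ (castZ y) (castZ x) =
      innZ (castZ (x ∘ revInit n)) (castZ (y ∘ revInit n)) +
        y ⟨0, hn⟩ * ∑ p, (x (revInit n p) : ℤ) := by
  obtain ⟨k, rfl⟩ : ∃ k, n = k + 1 := ⟨n - 1, by omega⟩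
  rw [← innZ_rev, innZ_castSucc, mul_comm]
  have hlast : (Fin.last k).rev = ⟨0, hn⟩ := Fin.ext (by simp)
  simp only [rev, castZ, hlast]
  rfl

lemma innN_cast {n : ℕ} (a b : Fin n → ℕ) : (innN a b : ℤ) = innZ (castZ a) (castZ b) := by
  simp only [innN, innZ, castZ, Nat.cast_sum, Nat.cast_ite, Nat.cast_mul, Nat.cast_zero]

lemma asum_castZ {n : ℕ} (a : Fin n → ℕ) : asum (castZ a) = ∑ i, a i := by
  simp [asum, castZ]

lemma asum_add {k : ℕ} (a b : Fin k → ℤ) : asum (a + b) = asum a + asum b := by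
  simp [asum, Finset.sum_add_distrib]

end Arrays

section Poch

variable {K : Type*} [Field K]

lemma poch_zero {R : Type*} [CommRing R] (z a : R) : poch z a 0 = 1 := rfl

lemma poch_succ {R : Type*} [CommRing R] (z a : R) (k : ℕ) :
    poch z a (k + 1) = poch z a k * (1 - z * a ^ k) :=
  Finset.prod_range_succ _ _

lemma poch_one_left {R : Type*} [CommRing R] (a : R) {k : ℕ} (hk : 0 < k) : poch 1 a k = 0 :=
  Finset.prod_eq_zero (Finset.mem_range.mpr hk) (by simp)

lemma poch_zpow_neg_mul_poch {y : K} (hy : y ≠ 0) {N k : ℕ} (hk : k ≤ N) :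
    poch (y ^ (-(2 * N : ℤ))) (y ^ 2) k * poch (y ^ 2) (y ^ 2) (N - k) =
      (-1) ^ k * y ^ ((k : ℤ) * (k - 1) - 2 * N * k) * poch (y ^ 2) (y ^ 2) N := by
  induction k with
  | zero => simp [poch]
  | succ k ih =>
    set a := y ^ (2 * (k : ℤ) - 2 * N)
    set b := y ^ (2 * (N : ℤ) - 2 * k)
    have hab : a * b = 1 := by
      rw [← zpow_add₀ hy, show 2 * (k : ℤ) - 2 * N + (2 * N - 2 * k) = 0 by ring, zpow_zero]
    have ha : y ^ (-(2 * N : ℤ)) * (y ^ 2) ^ k = a := by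
      rw [← pow_mul, ← zpow_natCast, ← zpow_add₀ hy]; congr 1; push_cast; ring
    have hb : y ^ 2 * (y ^ 2) ^ (N - (k + 1)) = b := by
      rw [← pow_succ', ← pow_mul, ← zpow_natCast]; congr 1; omega
    have hsplit : poch (y ^ 2) (y ^ 2) (N - k) = poch (y ^ 2) (y ^ 2) (N - (k + 1)) * (1 - b) := by
      rw [show N - k = N - (k + 1) + 1 by omega, poch_succ, hb]
    have hexp : y ^ (((k + 1 : ℕ) : ℤ) * ((k + 1 : ℕ) - 1) - 2 * N * (k + 1 : ℕ)) =
        y ^ ((k : ℤ) * (k - 1) - 2 * N * k) * a := by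
      rw [← zpow_add₀ hy]; push_cast; ring_nf
    -- `1 - a = -a (1 - b)` because `a b = 1`
    calc poch (y ^ (-(2 * N : ℤ))) (y ^ 2) (k + 1) * poch (y ^ 2) (y ^ 2) (N - (k + 1))
        = poch (y ^ (-(2 * N : ℤ))) (y ^ 2) k * poch (y ^ 2) (y ^ 2) (N - k) * (-a) := by
          rw [poch_succ, ha, hsplit]
          linear_combination -(poch (y ^ (-(2 * N : ℤ))) (y ^ 2) k *
            poch (y ^ 2) (y ^ 2) (N - (k + 1))) * hab
      _ = _ := by rw [ih (by omega), hexp]; ring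

end Poch

section Phi

variable {K : Type*} [Field K] {k : ℕ}

lemma hasValueAt_phiP {z₀ : K} {qv lam mu : RatFunc K} {qv₀ lam₀ mu₀ : K}
    (hq : HasValueAt qv z₀ qv₀) (hl : HasValueAt lam z₀ lam₀) (hm : HasValueAt mu z₀ mu₀)
    (hq₀ : qv₀ ≠ 0) (hl₀ : lam₀ ≠ 0) (hqq : ∀ j, poch qv₀ qv₀ j ≠ 0) (γ β : Fin k → ℤ)
    (hμ : poch mu₀ qv₀ (asum β).toNat ≠ 0) :
    HasValueAt (phiP qv lam mu γ β) z₀ (phiP qv₀ lam₀ mu₀ γ β) := by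
  unfold phiP phiBarP
  by_cases hθ : ∀ i, 0 ≤ γ i ∧ γ i ≤ β i
  · obtain ⟨N, hN⟩ := Int.eq_ofNat_of_zero_le (Finset.sum_nonneg fun i _ => (hθ i).1)
    rw [if_pos hθ, if_pos hθ, show asum γ = N from hN, zpow_natCast, zpow_natCast]
    refine ((hq.zpow hq₀ _).mul ((hm.div hl hl₀).pow N)).mul ((((hl.poch hq _).mul
      ((hm.div hl hl₀).poch hq _)).div (hm.poch hq _) hμ).mul (hasValueAt_prod _ fun i _ => ?_))
    exact (hq.poch hq _).div ((hq.poch hq _).mul (hq.poch hq _)) (mul_ne_zero (hqq _) (hqq _))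
  · simpa [if_neg hθ] using hasValueAt_zero

lemma phiP_one_left {qv mu : K} (hqq : ∀ j, poch qv qv j ≠ 0) {η β : Fin k → ℤ} (hβ : 0 ≤ β)
    (hμ : poch mu qv (asum β).toNat ≠ 0) : phiP qv 1 mu η β = if η = 0 then 1 else 0 := by
  by_cases hη : η = 0
  · subst hη
    have hasum : asum (0 : Fin k → ℤ) = 0 := Finset.sum_const_zero
    rw [if_pos rfl, phiP, phiBarP, if_pos fun i => ⟨le_rfl, hβ i⟩, hasum]
    simp only [innZ, Pi.zero_apply, Finset.sum_const_zero, mul_zero, ite_self, zpow_zero,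
      Int.toNat_zero, sub_zero, div_one, poch_zero, one_mul, mul_one]
    rw [div_self hμ, Finset.prod_eq_one fun i _ => div_self (hqq _), mul_one]
  rw [if_neg hη, phiP, phiBarP]
  split_ifs with hθ
  · have hpos : 0 < asum η := by
      refine lt_of_le_of_ne (Finset.sum_nonneg fun i _ => (hθ i).1) fun h => hη ?_
      funext i
      exact (Finset.sum_eq_zero_iff_of_nonneg fun i _ => (hθ i).1).mp h.symm i (Finset.mem_univ _)
    rw [poch_one_left _ (by omega)]
    ring
  · ring

end Phi

section Amat

variable {K : Type*} [Field K] {n : ℕ}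

lemma hasValueAt_amat {qv z₀ : K} (hq : qv ≠ 0) (hz : z₀ ≠ 0) (l m : ℕ) (γ δ α β : Fin n → ℕ)
    (hqq : ∀ j, poch (qv ^ 2) (qv ^ 2) j ≠ 0)
    (hμ₁ : ∀ j ≤ (asum (bar γ + bar δ)).toNat, poch (qv ^ (-(l : ℤ) - m) * z₀) (qv ^ 2) j ≠ 0)
    (hμ₂ : poch (qv ^ (-(2 * m : ℤ))) (qv ^ 2) (asum (bar β)).toNat ≠ 0) :
    HasValueAt (Amat (RatFunc.C qv) RatFunc.X l m γ δ α β) z₀ (Amat qv z₀ l m γ δ α β) := by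
  have hC : HasValueAt (RatFunc.C qv) z₀ qv := hasValueAt_C qv
  have hCz (k : ℤ) : HasValueAt (RatFunc.C qv ^ k) z₀ (qv ^ k) := hC.zpow hq k
  have hq2 : qv ^ 2 ≠ 0 := pow_ne_zero 2 hq
  refine (hCz _).mul (hasValueAt_sum _ fun ξ hξ => ?_)
  have hξ : (asum ξ).toNat ≤ (asum (bar γ + bar δ)).toNat :=
    Int.toNat_le_toNat (Finset.sum_le_sum fun i _ => (Finset.mem_Icc.mp hξ).2 i)
  exact (hasValueAt_phiP (hC.pow 2) ((hCz _).mul hasValueAt_X) ((hCz _).mul hasValueAt_X) hq2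
      (mul_ne_zero (zpow_ne_zero _ hq) hz) hqq _ _ (hμ₁ _ hξ)).mul
    (hasValueAt_phiP (hC.pow 2) ((hCz _).mul (hasValueAt_X.inv hz)) (hCz _) hq2
      (mul_ne_zero (zpow_ne_zero _ hq) (inv_ne_zero hz)) hqq _ _ hμ₂)

lemma amat_at_special_point {qv : K} (hq : qv ≠ 0) (l m : ℕ) (γ δ α β : Fin n → ℕ)
    (hqq : ∀ j, poch (qv ^ 2) (qv ^ 2) j ≠ 0)
    (hμ : poch (qv ^ (-(2 * m : ℤ))) (qv ^ 2) (asum (bar β)).toNat ≠ 0) :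
    Amat qv (qv ^ (-(l : ℤ) - m)) l m γ δ α β =
      qv ^ ((innN α β : ℤ) - innN δ γ) *
        phiP (qv ^ 2) (qv ^ (-(2 * l : ℤ))) (qv ^ (-(2 * (l + m) : ℤ))) (bar γ)
          (bar γ + bar δ) := by
  have hbar {x : Fin n → ℕ} : 0 ≤ bar x := fun i => Int.natCast_nonneg _
  have hlam : qv ^ (-(l : ℤ) - m) * (qv ^ (-(l : ℤ) - m))⁻¹ = 1 :=
    mul_inv_cancel₀ (zpow_ne_zero _ hq)
  simp only [Amat, hlam, phiP_one_left hqq hbar hμ, sub_eq_zero, mul_ite, mul_one, mul_zero,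
    Finset.sum_ite_eq, Finset.mem_Icc, le_refl, and_true, add_nonneg hbar hbar, if_true,
    add_sub_cancel_right]
  rw [← zpow_add₀ hq, ← zpow_add₀ hq]
  ring_nf

end Amat

section Special

lemma poch_q_neg_eq {N k : ℕ} (hk : k ≤ N) :
    poch (q ^ (-(2 * N : ℤ))) (q ^ 2) k =
      (-1) ^ k * q ^ ((k : ℤ) * (k - 1) - 2 * N * k) * poch (q ^ 2) (q ^ 2) N /
        poch (q ^ 2) (q ^ 2) (N - k) := by
  rw [eq_div_iff (poch_qsq_ne_zero _)]
  exact poch_zpow_neg_mul_poch q_ne_zero hk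

lemma poch_q_neg_ratio {l m L M a d : ℕ} (hl : L + a = l) (hm : M + d = m) :
    (q ^ (-(2 * l : ℤ))) ^ (M : ℤ) *
        (poch (q ^ (-(2 * m : ℤ))) (q ^ 2) M * poch (q ^ (-(2 * l : ℤ))) (q ^ 2) L /
          poch (q ^ (-(2 * (m + l) : ℤ))) (q ^ 2) (M + L)) =
      q ^ (2 * (d * L : ℤ)) * (qbinom2 (l + m) m)⁻¹ * qbinom2 (a + d) a := by
  rw [← Nat.cast_add, poch_q_neg_eq (N := m) (by omega), poch_q_neg_eq (N := l) (by omega),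
    poch_q_neg_eq (N := m + l) (by omega), qbinom2, qbinom2, Nat.add_sub_cancel,
    Nat.add_sub_cancel_left, show m - M = d by omega, show l - L = a by omega,
    show m + l - (M + L) = d + a by omega, add_comm l m, add_comm a d]
  have hpow : (q ^ (-(2 * l : ℤ))) ^ (M : ℤ) * ((-1) ^ M * q ^ ((M : ℤ) * (M - 1) - 2 * m * M)) *
      ((-1) ^ L * q ^ ((L : ℤ) * (L - 1) - 2 * l * L)) =
      q ^ (2 * (d * L : ℤ)) * ((-1) ^ (M + L) *
        q ^ (((M + L : ℕ) : ℤ) * ((M + L : ℕ) - 1) - 2 * (m + l : ℕ) * (M + L : ℕ))) := by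
    have hexp : -(2 * (l : ℤ)) * M + ((M : ℤ) * (M - 1) - 2 * m * M) +
        ((L : ℤ) * (L - 1) - 2 * l * L) =
        2 * (d * L) + (((M + L : ℕ) : ℤ) * ((M + L : ℕ) - 1) - 2 * (m + l : ℕ) * (M + L : ℕ)) := by
      subst hl hm; push_cast; ring
    calc _ = (-1) ^ M * (-1) ^ L * (q ^ (-(2 * (l : ℤ)) * M) *
          q ^ ((M : ℤ) * (M - 1) - 2 * m * M) * q ^ ((L : ℤ) * (L - 1) - 2 * l * L)) := by
          rw [← zpow_mul]; ring
      _ = _ := by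
          rw [← zpow_add₀ q_ne_zero, ← zpow_add₀ q_ne_zero, hexp, zpow_add₀ q_ne_zero, pow_add]
          ring
  have hd := poch_qsq_ne_zero d
  have ha := poch_qsq_ne_zero a
  have hml := poch_qsq_ne_zero (m + l)
  have hz : q ^ (((M + L : ℕ) : ℤ) * ((M + L : ℕ) - 1) - 2 * (m + l : ℕ) * (M + L : ℕ)) ≠ 0 :=
    zpow_ne_zero _ q_ne_zero
  field_simp
  linear_combination
    (poch (q ^ 2) (q ^ 2) m * poch (q ^ 2) (q ^ 2) l * poch (q ^ 2) (q ^ 2) (d + a)) * hpow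

lemma phiP_at_special_point {k : ℕ} (a d : Fin k → ℕ) {a₀ d₀ l m : ℕ} (ha : ∑ p, a p + a₀ = l)
    (hd : ∑ p, d p + d₀ = m) :
    phiP (q ^ 2) (q ^ (-(2 * m : ℤ))) (q ^ (-(2 * (m + l) : ℤ))) (castZ d) (castZ d + castZ a) =
      q ^ (2 * (innZ (castZ a) (castZ d) + d₀ * ∑ p, (a p : ℤ))) * (qbinom2 (l + m) m)⁻¹ *
        (qbinom2 (a₀ + d₀) a₀ * ∏ p, qbinom2 (a p + d p) (a p)) := by
  have hθ (i : Fin k) : 0 ≤ castZ d i ∧ castZ d i ≤ (castZ d + castZ a) i :=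
    ⟨Int.natCast_nonneg _, by simp [castZ]⟩
  have hlam : q ^ (-(2 * (m + l) : ℤ)) / q ^ (-(2 * m : ℤ)) = q ^ (-(2 * l : ℤ)) := by
    rw [← zpow_sub₀ q_ne_zero]; ring_nf
  have hbinom (i : Fin k) : poch (q ^ 2) (q ^ 2) ((castZ d + castZ a) i).toNat /
      (poch (q ^ 2) (q ^ 2) ((castZ d + castZ a) i - castZ d i).toNat *
        poch (q ^ 2) (q ^ 2) (castZ d i).toNat) = qbinom2 (a i + d i) (a i) := by
    simp only [Pi.add_apply, castZ, add_sub_cancel_left, Int.toNat_natCast]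
    rw [← Nat.cast_add, Int.toNat_natCast, qbinom2, Nat.add_sub_cancel_left, add_comm (d i),
      mul_comm]
  rw [phiP, phiBarP, if_pos hθ, add_sub_cancel_left, asum_add, asum_castZ, asum_castZ,
    add_sub_cancel_left, hlam, ← Nat.cast_add (∑ i, d i), Finset.prod_congr rfl fun i _ => hbinom i]
  simp only [Int.toNat_natCast]
  calc _ = (q ^ 2) ^ innZ (castZ a) (castZ d) * ((q ^ (-(2 * l : ℤ))) ^ ((∑ i, d i : ℕ) : ℤ) *
      (poch (q ^ (-(2 * m : ℤ))) (q ^ 2) (∑ i, d i) * poch (q ^ (-(2 * l : ℤ))) (q ^ 2) (∑ i, a i) /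
        poch (q ^ (-(2 * (m + l) : ℤ))) (q ^ 2) (∑ i, d i + ∑ i, a i))) *
      ∏ p, qbinom2 (a p + d p) (a p) := by ring
    _ = _ := by
      rw [poch_q_neg_ratio ha hd, ← zpow_natCast, ← zpow_mul, mul_add, zpow_add₀ q_ne_zero]
      push_cast
      ring

end Special

theorem statement14_general (n l m : ℕ) (hn : 2 ≤ n) (α γ β δ : Fin n → ℕ)
    (hα : ∑ i, α i = l) (hγ : ∑ i, γ i = l) (hδ : ∑ i, δ i = m) :
    Polynomial.eval (q ^ (-(m : ℤ) - l))
        (Amat qz zz m l (rev δ) (rev α) (rev β) (rev γ)).denom ≠ 0 ∧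
      RatFunc.eval (RingHom.id Fq) (q ^ (-(m : ℤ) - l))
          (Amat qz zz m l (rev δ) (rev α) (rev β) (rev γ)) =
        q ^ (innZ (castZ δ) (castZ α) + innZ (castZ γ) (castZ β)) *
          (qbinom2 (l + m) m)⁻¹ * ∏ i, qbinom2 (α i + δ i) (α i) := by
  have hn0 : 0 < n := by omega
  have hsplit (x : Fin n → ℕ) : ∑ p, (x ∘ revInit n) p + x ⟨0, hn0⟩ = ∑ i, x i := by
    rw [sum_univ_eq_add_sum_revInit hn0, add_comm]; rfl
  have hμ₁ (j : ℕ) (hj : j ≤ (asum (bar (rev δ) + bar (rev α))).toNat) :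
      poch (q ^ (-(m : ℤ) - l) * q ^ (-(m : ℤ) - l)) (q ^ 2) j ≠ 0 := by
    rw [← zpow_add₀ q_ne_zero,
      show -(m : ℤ) - l + (-m - l) = -(2 * (m + l : ℕ) : ℤ) by push_cast; ring]
    rw [bar_rev, bar_rev, asum_add, asum_castZ, asum_castZ, ← Nat.cast_add, Int.toNat_natCast] at hj
    exact poch_q_neg_ne_zero (by have := hsplit δ; have := hsplit α; omega)
  have hμ₂ : poch (q ^ (-(2 * l : ℤ))) (q ^ 2) (asum (bar (rev γ))).toNat ≠ 0 := by
    rw [bar_rev, asum_castZ, Int.toNat_natCast]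
    exact poch_q_neg_ne_zero (by have := hsplit γ; omega)
  have hval := hasValueAt_amat q_ne_zero (zpow_ne_zero _ q_ne_zero) m l (rev δ) (rev α) (rev β)
    (rev γ) poch_qsq_ne_zero hμ₁ hμ₂
  refine ⟨hval.1, hval.2.trans ?_⟩
  rw [amat_at_special_point q_ne_zero m l _ _ _ _ poch_qsq_ne_zero hμ₂, bar_rev, bar_rev,
    phiP_at_special_point _ _ ((hsplit α).trans hα) ((hsplit δ).trans hδ),
    prod_univ_eq_mul_prod_revInit hn0, innN_cast, innN_cast, castZ_rev, castZ_rev, castZ_rev,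
    castZ_rev, innZ_rev, innZ_rev, innZ_castZ_eq_revInit hn0 α δ]
  simp only [Function.comp_apply]
  set S := innZ (castZ (α ∘ revInit n)) (castZ (δ ∘ revInit n)) +
    δ ⟨0, hn0⟩ * ∑ p, (α (revInit n p) : ℤ)
  have hS : q ^ (innZ (castZ γ) (castZ β) - S) * q ^ (2 * S) =
      q ^ (S + innZ (castZ γ) (castZ β)) := by
    rw [← zpow_add₀ q_ne_zero]; ring_nf
  rw [← hS]
  ring

/-- factorization of `R*` at the special point:
the rational function `A^{(m,l)}(z)^{ρ(δ),ρ(α)}_{ρ(β),ρ(γ)}` is regular at `z = q^{-m-l}`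
and its value there is `q^{⟨δ,α⟩+⟨γ,β⟩} binom(l+m,m)_{q²}⁻¹ ∏ᵢ binom(αᵢ+δᵢ,αᵢ)_{q²}`. -/
theorem statement14 (n l m : ℕ) (hn : 2 ≤ n) (α γ β δ : Fin n → ℕ)
    (hα : ∑ i, α i = l) (hγ : ∑ i, γ i = l) (hβ : ∑ i, β i = m) (hδ : ∑ i, δ i = m)
    (hc : castZ γ - castZ δ = castZ α - castZ β) :
    Polynomial.eval (q ^ (-(m : ℤ) - l))
        (Amat qz zz m l (rev δ) (rev α) (rev β) (rev γ)).denom ≠ 0 ∧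
      RatFunc.eval (RingHom.id Fq) (q ^ (-(m : ℤ) - l))
          (Amat qz zz m l (rev δ) (rev α) (rev β) (rev γ)) =
        q ^ (innZ (castZ δ) (castZ α) + innZ (castZ γ) (castZ β)) *
          (qbinom2 (l + m) m)⁻¹ * ∏ i, qbinom2 (α i + δ i) (α i) :=
  statement14_general n l m hn α γ β δ hα hγ hδ

end KOY
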